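/- Let H be a connected simple graph with minimum degree at least 2 satisfying γ_dR(H) ≤ 12·n(H)/11, and let u ∈ V(H). If G is the graph obtained from the disjoint union of H and C_{m,k}, for integers m ≥ 3 and k ≥ 1 other than the cases m = 5 with k ∈ {2,3,5} and m = 7 with k = 3, by adding the edge u y_k, then γ_dR(G) ≤ 12·n(G)/11. -/

import Mathlib

/-- A double Roman dominating function on a simple graph `G`:
values in `{0,1,2,3}`, every vertex with value `0` has two neighbors with value `2`
or one neighbor with value `3`, and every vertex with value `1` has a neighbor with
value at least `2`. -/
def IsDRDF {V : Type*} (G : SimpleGraph V) (f : V → ℕ) : Prop :=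
  (∀ v, f v ≤ 3) ∧
  (∀ v, f v = 0 →
    (∃ u w, u ≠ w ∧ G.Adj v u ∧ G.Adj v w ∧ f u = 2 ∧ f w = 2) ∨ ∃ u, G.Adj v u ∧ f u = 3) ∧
  (∀ v, f v = 1 → ∃ u, G.Adj v u ∧ 2 ≤ f u)

/-- The double Roman domination number: the minimum weight of a DRDF. -/
noncomputable def gammaDR {V : Type*} [Fintype V] (G : SimpleGraph V) : ℕ :=
  sInf {w | ∃ f, IsDRDF G f ∧ ∑ v, f v = w}

/-- Base relation for the graph `C_{m,k}`: a cycle `x_1 ⋯ x_m x_1` (here `Fin m`, with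
`x_1` being `0`), a path `y_1 ⋯ y_k` (here `Fin k`, with `y_1` being `0` and `y_k` being
`k-1`), together with the edge `x_1 y_1`. -/
def cmkR (m k : ℕ) : (Fin m ⊕ Fin k) → (Fin m ⊕ Fin k) → Prop
  | .inl u, .inl v => (u.val + 1) % m = v.val
  | .inr i, .inr j => i.val + 1 = j.val
  | .inl u, .inr j => u.val = 0 ∧ j.val = 0
  | .inr _, .inl _ => False

/-- The graph `C_{m,k}`. -/
def Cmk (m k : ℕ) : SimpleGraph (Fin m ⊕ Fin k) := SimpleGraph.fromRel (cmkR m k)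
/-- Base relation for the graph obtained from the disjoint union of `H` and `C_{m,k}`
by adding the edge joining `u ∈ V(H)` to the leaf `y_k` of `C_{m,k}`. -/
def joinLeafR {V : Type*} (H : SimpleGraph V) (u : V) (m k : ℕ) :
    (V ⊕ (Fin m ⊕ Fin k)) → (V ⊕ (Fin m ⊕ Fin k)) → Prop
  | .inl a, .inl b => H.Adj a b
  | .inr a, .inr b => cmkR m k a b
  | .inl a, .inr (.inr j) => a = u ∧ j.val + 1 = k
  | _, _ => False

/-- The graph obtained from the disjoint union of `H` and `C_{m,k}` by adding the edge
`u y_k`. -/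
def joinLeaf {V : Type*} (H : SimpleGraph V) (u : V) (m k : ℕ) :
    SimpleGraph (V ⊕ (Fin m ⊕ Fin k)) :=
  SimpleGraph.fromRel (joinLeafR H u m k)

/-!
`G` contains the disjoint union of `H` and `C_{m,k}`, so a DRDF of each gives one of `G`, and
it suffices that `11 γ_dR(C_{m,k}) ≤ 12 (m + k)`. Putting `3` on `x_1, x_4, x_7, …` and on
`y_3, y_6, …`, and a `2` on `x_{m-1}` when `m ≡ 1` (instead of a `3` on `x_m`) and on the leaf
when `k ≡ 2 (mod 3)`, gives weight at most `m + k + 1`, and at most `m + k` when `m ≡ 0` or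
`k ≡ 1 (mod 3)`. This settles all cases with `m + k ≥ 11`; among the remaining ones, six are
handled by explicit functions and the excluded ones are exactly those where
`11 γ_dR(C_{m,k}) > 12 (m + k)`.
-/

open Finset

section DRDF

variable {V W : Type*}

theorem IsDRDF.mono {G G' : SimpleGraph V} {f : V → ℕ} (hle : G ≤ G') (hf : IsDRDF G f) :
    IsDRDF G' f := by
  obtain ⟨hf3, hf0, hf1⟩ := hf
  refine ⟨hf3, fun v hv => ?_, fun v hv => ?_⟩
  · rcases hf0 v hv with ⟨a, b, hab, ha, hb, ha2, hb2⟩ | ⟨a, ha, ha3⟩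
    · exact .inl ⟨a, b, hab, hle ha, hle hb, ha2, hb2⟩
    · exact .inr ⟨a, hle ha, ha3⟩
  · obtain ⟨a, ha, ha2⟩ := hf1 v hv
    exact ⟨a, hle ha, ha2⟩

theorem IsDRDF.sum_elim {G : SimpleGraph V} {G' : SimpleGraph W} {f : V → ℕ} {g : W → ℕ}
    (hf : IsDRDF G f) (hg : IsDRDF G' g) : IsDRDF (G ⊕g G') (Sum.elim f g) := by
  obtain ⟨hf3, hf0, hf1⟩ := hf
  obtain ⟨hg3, hg0, hg1⟩ := hg
  refine ⟨Sum.rec hf3 hg3, ?_, ?_⟩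
  · rintro (v | v) hv
    · rcases hf0 v hv with ⟨a, b, hab, ha, hb, ha2, hb2⟩ | ⟨a, ha, ha3⟩
      · exact .inl ⟨.inl a, .inl b, by simpa using hab, ha, hb, ha2, hb2⟩
      · exact .inr ⟨.inl a, ha, ha3⟩
    · rcases hg0 v hv with ⟨a, b, hab, ha, hb, ha2, hb2⟩ | ⟨a, ha, ha3⟩
      · exact .inl ⟨.inr a, .inr b, by simpa using hab, ha, hb, ha2, hb2⟩
      · exact .inr ⟨.inr a, ha, ha3⟩
  · rintro (v | v) hv
    · obtain ⟨a, ha, ha2⟩ := hf1 v hv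
      exact ⟨.inl a, ha, ha2⟩
    · obtain ⟨a, ha, ha2⟩ := hg1 v hv
      exact ⟨.inr a, ha, ha2⟩

theorem isDRDF_of_eq_zero_imp_adj_three {G : SimpleGraph V} {f : V → ℕ} (h3 : ∀ v, f v ≤ 3)
    (h1 : ∀ v, f v ≠ 1) (h0 : ∀ v, f v = 0 → ∃ u, G.Adj v u ∧ f u = 3) : IsDRDF G f :=
  ⟨h3, fun v hv => .inr (h0 v hv), fun v hv => absurd hv (h1 v)⟩

variable [Fintype V] [Fintype W]

theorem exists_isDRDF_sum_eq_gammaDR (G : SimpleGraph V) :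
    ∃ f, IsDRDF G f ∧ ∑ v, f v = gammaDR G :=
  Nat.sInf_mem (s := {w | ∃ f, IsDRDF G f ∧ ∑ v, f v = w})
    ⟨_, fun _ => 3, ⟨fun _ => le_rfl, by simp, by simp⟩, rfl⟩

theorem gammaDR_le_sum {G : SimpleGraph V} {f : V → ℕ} (hf : IsDRDF G f) :
    gammaDR G ≤ ∑ v, f v :=
  Nat.sInf_le ⟨f, hf, rfl⟩

theorem gammaDR_anti {G G' : SimpleGraph V} (hle : G ≤ G') : gammaDR G' ≤ gammaDR G := by
  obtain ⟨f, hf, hsum⟩ := exists_isDRDF_sum_eq_gammaDR G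
  exact hsum ▸ gammaDR_le_sum (hf.mono hle)

theorem gammaDR_sum_le (G : SimpleGraph V) (G' : SimpleGraph W) :
    gammaDR (G ⊕g G') ≤ gammaDR G + gammaDR G' := by
  obtain ⟨f, hf, hfsum⟩ := exists_isDRDF_sum_eq_gammaDR G
  obtain ⟨g, hg, hgsum⟩ := exists_isDRDF_sum_eq_gammaDR G'
  calc gammaDR (G ⊕g G') ≤ ∑ v, Sum.elim f g v := gammaDR_le_sum (hf.sum_elim hg)
    _ = gammaDR G + gammaDR G' := by
      simp only [Fintype.sum_sum_type, Sum.elim_inl, Sum.elim_inr, hfsum, hgsum]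

end DRDF

theorem sum_cmk_le_joinLeaf {V : Type*} (H : SimpleGraph V) (u : V) (m k : ℕ) :
    H ⊕g Cmk m k ≤ joinLeaf H u m k := by
  rintro (a | a) (b | b) hab
  · rw [SimpleGraph.sum_adj_inl] at hab
    exact (SimpleGraph.fromRel_adj _ _ _).2 ⟨by simpa using hab.ne, .inl hab⟩
  · simp at hab
  · simp at hab
  · rw [SimpleGraph.sum_adj_inr, Cmk, SimpleGraph.fromRel_adj] at hab
    exact (SimpleGraph.fromRel_adj _ _ _).2 ⟨by simpa using hab.1, hab.2⟩

instance (m k : ℕ) : DecidableRel (cmkR m k)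
  | .inl u, .inl v => inferInstanceAs (Decidable ((u.val + 1) % m = v.val))
  | .inr i, .inr j => inferInstanceAs (Decidable (i.val + 1 = j.val))
  | .inl u, .inr j => inferInstanceAs (Decidable (u.val = 0 ∧ j.val = 0))
  | .inr _, .inl _ => inferInstanceAs (Decidable False)

instance (m k : ℕ) : DecidableRel (Cmk m k).Adj := fun a b =>
  inferInstanceAs (Decidable (a ≠ b ∧ (cmkR m k a b ∨ cmkR m k b a)))

section Cmk

variable {m k : ℕ}

theorem cmk_adj_inl_inl {i j : Fin m} (h : i.val + 1 = j.val ∨ j.val + 1 = i.val) :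
    (Cmk m k).Adj (.inl i) (.inl j) := by
  refine (SimpleGraph.fromRel_adj _ _ _).2 ⟨fun hij => by cases hij; omega, ?_⟩
  rcases h with h | h
  · exact .inl (show (i.val + 1) % m = j.val by rw [h, Nat.mod_eq_of_lt j.isLt])
  · exact .inr (show (j.val + 1) % m = i.val by rw [h, Nat.mod_eq_of_lt i.isLt])

theorem cmk_adj_last_zero (hm : 2 ≤ m) {i j : Fin m} (hi : i.val + 1 = m) (hj : j.val = 0) :
    (Cmk m k).Adj (.inl i) (.inl j) :=
  (SimpleGraph.fromRel_adj _ _ _).2 ⟨fun hij => by cases hij; omega,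
    .inl (show (i.val + 1) % m = j.val by rw [hi, Nat.mod_self, hj])⟩

theorem cmk_adj_inr_inr {i j : Fin k} (h : i.val + 1 = j.val ∨ j.val + 1 = i.val) :
    (Cmk m k).Adj (.inr i) (.inr j) :=
  (SimpleGraph.fromRel_adj _ _ _).2 ⟨fun hij => by cases hij; omega, h⟩

theorem cmk_adj_inr_inl {i : Fin k} {j : Fin m} (hi : i.val = 0) (hj : j.val = 0) :
    (Cmk m k).Adj (.inr i) (.inl j) :=
  (SimpleGraph.fromRel_adj _ _ _).2 ⟨Sum.inr_ne_inl, .inr ⟨hj, hi⟩⟩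

def cycleVal (m i : ℕ) : ℕ :=
  if i % 3 = 0 ∧ i + 2 ≤ m then 3 else if m % 3 = 1 ∧ i + 2 = m then 2 else 0

def pathVal (k j : ℕ) : ℕ :=
  if j % 3 = 2 then 3 else if k % 3 = 2 ∧ j + 1 = k then 2 else 0

def cmkDRDF (m k : ℕ) : Fin m ⊕ Fin k → ℕ :=
  Sum.elim (fun i => cycleVal m i) (fun j => pathVal k j)

theorem isDRDF_cmkDRDF (hm : 2 ≤ m) : IsDRDF (Cmk m k) (cmkDRDF m k) := by
  refine isDRDF_of_eq_zero_imp_adj_three ?_ ?_ ?_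
  · rintro (i | j) <;> simp only [cmkDRDF, Sum.elim_inl, Sum.elim_inr, cycleVal, pathVal] <;>
      split_ifs <;> omega
  · rintro (i | j) <;> simp only [cmkDRDF, Sum.elim_inl, Sum.elim_inr, cycleVal, pathVal] <;>
      split_ifs <;> omega
  · rintro (i | j) h0
    · have hi := i.isLt
      simp only [cmkDRDF, Sum.elim_inl, cycleVal] at h0
      by_cases hlast : i.val + 1 = m
      · exact ⟨.inl ⟨0, by omega⟩, cmk_adj_last_zero hm hlast rfl, if_pos ⟨rfl, hm⟩⟩
      obtain h | h : i.val % 3 = 1 ∨ i.val % 3 = 2 ∧ i.val + 3 ≤ m := by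
        split_ifs at h0; omega
      · exact ⟨.inl ⟨i - 1, by omega⟩, cmk_adj_inl_inl (.inr (by dsimp only; omega)),
          if_pos (by dsimp only; omega)⟩
      · exact ⟨.inl ⟨i + 1, by omega⟩, cmk_adj_inl_inl (.inl rfl),
          if_pos (by dsimp only; omega)⟩
    · have hj := j.isLt
      simp only [cmkDRDF, Sum.elim_inr, pathVal] at h0
      obtain h | h | h : j.val = 0 ∨ j.val % 3 = 0 ∧ 0 < j.val ∨
          j.val % 3 = 1 ∧ j.val + 1 < k := by
        split_ifs at h0; omega
      · exact ⟨.inl ⟨0, by omega⟩, cmk_adj_inr_inl h rfl, if_pos ⟨rfl, hm⟩⟩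
      · exact ⟨.inr ⟨j - 1, by omega⟩, cmk_adj_inr_inr (.inr (by dsimp only; omega)),
          if_pos (by dsimp only; omega)⟩
      · exact ⟨.inr ⟨j + 1, h.2⟩, cmk_adj_inr_inr (.inl rfl),
          if_pos (by dsimp only; omega)⟩

theorem sum_range_cycleVal (m n : ℕ) :
    ∑ i ∈ range n, cycleVal m i =
      3 * ((min n (m - 1) + 2) / 3) + if m % 3 = 1 ∧ 2 ≤ m ∧ m ≤ n + 1 then 2 else 0 := by
  induction n with
  | zero => rw [sum_range_zero, if_neg (by omega)]; omega
  | succ n ih => rw [sum_range_succ, ih, cycleVal]; split_ifs <;> omega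

theorem sum_range_pathVal (k n : ℕ) :
    ∑ j ∈ range n, pathVal k j = 3 * (n / 3) + if k % 3 = 2 ∧ k ≤ n then 2 else 0 := by
  induction n with
  | zero => rw [sum_range_zero, if_neg (by omega)]; omega
  | succ n ih => rw [sum_range_succ, ih, pathVal]; split_ifs <;> omega

theorem sum_cmkDRDF_le (h : m % 3 = 0 ∨ k % 3 = 1 ∨ 11 ≤ m + k) :
    11 * ∑ v, cmkDRDF m k v ≤ 12 * (m + k) := by
  rw [Fintype.sum_sum_type]
  simp only [cmkDRDF, Sum.elim_inl, Sum.elim_inr]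
  rw [Fin.sum_univ_eq_sum_range (cycleVal m), Fin.sum_univ_eq_sum_range (pathVal k),
    sum_range_cycleVal, sum_range_pathVal]
  split_ifs <;> omega

theorem gammaDR_cmk_le (hm : 3 ≤ m) (hk : 1 ≤ k) (h5 : ¬ (m = 5 ∧ (k = 2 ∨ k = 3 ∨ k = 5)))
    (h7 : ¬ (m = 7 ∧ k = 3)) : 11 * gammaDR (Cmk m k) ≤ 12 * (m + k) := by
  have of_isDRDF {f} (hf : IsDRDF (Cmk m k) f) (hw : 11 * ∑ v, f v ≤ 12 * (m + k)) :
      11 * gammaDR (Cmk m k) ≤ 12 * (m + k) :=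
    (Nat.mul_le_mul_left 11 (gammaDR_le_sum hf)).trans hw
  by_cases h : m % 3 = 0 ∨ k % 3 = 1 ∨ 11 ≤ m + k
  · exact of_isDRDF (isDRDF_cmkDRDF (by omega)) (sum_cmkDRDF_le h)
  obtain ⟨rfl, rfl⟩ | ⟨rfl, rfl⟩ | ⟨rfl, rfl⟩ | ⟨rfl, rfl⟩ | ⟨rfl, rfl⟩ | ⟨rfl, rfl⟩ :
      m = 4 ∧ k = 2 ∨ m = 4 ∧ k = 3 ∨ m = 4 ∧ k = 5 ∨ m = 4 ∧ k = 6 ∨ m = 7 ∧ k = 2 ∨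
        m = 8 ∧ k = 2 := by
    omega
  · exact of_isDRDF (f := Sum.elim ![0, 0, 3, 0] ![3, 0])
      (by unfold IsDRDF; decide) (by decide)
  · exact of_isDRDF (f := Sum.elim ![2, 0, 2, 0] ![0, 3, 0])
      (by unfold IsDRDF; decide) (by decide)
  · exact of_isDRDF (f := Sum.elim ![0, 0, 3, 0] ![3, 0, 0, 3, 0])
      (by unfold IsDRDF; decide) (by decide)
  · exact of_isDRDF (f := Sum.elim ![2, 0, 2, 0] ![0, 3, 0, 0, 3, 0])
      (by unfold IsDRDF; decide) (by decide)
  · exact of_isDRDF (f := Sum.elim ![0, 0, 3, 0, 0, 3, 0] ![3, 0])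
      (by unfold IsDRDF; decide) (by decide)
  · exact of_isDRDF (f := Sum.elim ![2, 0, 2, 0, 2, 0, 2, 0] ![0, 2])
      (by unfold IsDRDF; decide) (by decide)

end Cmk

theorem gammaDR_joinLeaf_le_general {V : Type*} [Fintype V] (H : SimpleGraph V)
    (hH : (gammaDR H : ℚ) ≤ 12 * (Fintype.card V) / 11)
    (u : V) (m k : ℕ) (hm : 3 ≤ m) (hk : 1 ≤ k)
    (h5 : ¬ (m = 5 ∧ (k = 2 ∨ k = 3 ∨ k = 5))) (h7 : ¬ (m = 7 ∧ k = 3)) :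
    (gammaDR (joinLeaf H u m k) : ℚ) ≤
      12 * (Fintype.card (V ⊕ (Fin m ⊕ Fin k))) / 11 := by
  have hjoin : (gammaDR (joinLeaf H u m k) : ℚ) ≤ gammaDR H + gammaDR (Cmk m k) := by
    exact_mod_cast (gammaDR_anti (sum_cmk_le_joinLeaf H u m k)).trans (gammaDR_sum_le H (Cmk m k))
  have hcmk : (11 : ℚ) * gammaDR (Cmk m k) ≤ 12 * (m + k) := by
    exact_mod_cast gammaDR_cmk_le hm hk h5 h7
  simp only [Fintype.card_sum, Fintype.card_fin]
  push_cast
  linarith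

/-- If `H` is a connected graph with minimum degree at least `2` satisfying
`γ_dR(H) ≤ 12 n(H) / 11`, `u ∈ V(H)`, and `G` is obtained from the disjoint union of
`H` and `C_{m,k}` (with `m ≥ 3`, `k ≥ 1` avoiding the excluded cases) by adding
the edge `u y_k`, then `γ_dR(G) ≤ 12 n(G) / 11`. -/
theorem gammaDR_joinLeaf_le {V : Type*} [Fintype V] (H : SimpleGraph V)
    (hconn : H.Connected) (hdeg : ∀ v, 2 ≤ {w | H.Adj v w}.ncard)
    (hH : (gammaDR H : ℚ) ≤ 12 * (Fintype.card V) / 11)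
    (u : V) (m k : ℕ) (hm : 3 ≤ m) (hk : 1 ≤ k)
    (h5 : ¬ (m = 5 ∧ (k = 2 ∨ k = 3 ∨ k = 5))) (h7 : ¬ (m = 7 ∧ k = 3)) :
    (gammaDR (joinLeaf H u m k) : ℚ) ≤
      12 * (Fintype.card (V ⊕ (Fin m ⊕ Fin k))) / 11 :=
  gammaDR_joinLeaf_le_general H hH u m k hm hk h5 h7
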